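/- arXiv:0711.3759 — 2 statements merged into one kernel-verified Lean document; each statement's English description precedes it below -/
import Mathlib

section
/- (Proposition 2.6.) Let n = 2. Fix t_0 ∈ ℂ and an integer k ≥ 2. Then the whole fibre over t_0 lies in Φ_k(X) — i.e. rank M^{X,s}_k(t_0, u) ≤ 2k for every s ∈ {1,2} and every u ∈ ℂ — if and only if either (a) rank M^i_{k-1}(t_0) ≤ k−1 for some i ∈ {1,2} (i.e. p_i ∈ Φ_{k−1}(C_i) for some i), or (b) rank M^i_k(t_0) ≤ k for both i = 1 and i = 2 (i.e. p_i ∈ Φ_k(C_i) for i = 1, 2). -/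
open Matrix

/-- The `k`-th jet matrix `M^i_k(t)` of a parametrized curve. -/
noncomputable def curveJet (r : ℕ) (a : ℂ → Fin (r + 1) → ℂ) (k : ℕ) (t : ℂ) :
    Matrix (Fin (k + 1)) (Fin (r + 1)) ℂ :=
  Matrix.of fun l j => iteratedDeriv (l : ℕ) (fun s => a s j) t

/-- The `i`-th block inclusion `ι_i : ℂ^{r_i+1} → V`. -/
noncomputable def blockIncl {n : ℕ} (r : Fin n → ℕ) (i : Fin n)
    (v : Fin (r i + 1) → ℂ) : (Σ j : Fin n, Fin (r j + 1)) → ℂ :=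
  fun p => if h : p.1 = i then v (Fin.cast (by rw [h]) p.2) else 0

/-- The `k`-th jet matrix `M^{X,s}_k(t,u)` of the decomposable scroll. -/
noncomputable def scrollJet {n : ℕ} (r : Fin n → ℕ)
    (a : ∀ i : Fin n, ℂ → Fin (r i + 1) → ℂ) (k : ℕ) (s : Fin n) (t : ℂ)
    (u : Fin n → ℂ) :
    Matrix (Fin (k + 1) ⊕ ({i : Fin n // i ≠ s} × Fin k))
      (Σ j : Fin n, Fin (r j + 1)) ℂ :=
  Matrix.of fun row =>
    match row with
    | Sum.inl l =>
        blockIncl r s (curveJet (r s) (a s) k t l) +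
          ∑ i ∈ Finset.univ.filter (fun i => i ≠ s),
            u i • blockIncl r i (curveJet (r i) (a i) k t l)
    | Sum.inr q =>
        blockIncl r q.1.1 (curveJet (r q.1.1) (a q.1.1) k t q.2.castSucc)

/-- The row space of a matrix, i.e. the span of its rows. -/
noncomputable def rowSpace {m α : Type*} [Fintype m] (M : Matrix m α ℂ) : Submodule ℂ (α → ℂ) :=
  Submodule.span ℂ (Set.range fun i => M i)

/-!
Write `s'` for the other index and `Oᵖ_i` for the row space of `M^i_p(t₀)`. Every row of
`M^{X,s}_k(t₀,u)` lies in `ι_s(Oᵏ_s) ⊕ ι_{s'}(Oᵏ_{s'})`, and all rows but the last row of the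
first block lie in `ι_s(Oᵏ⁻¹_s) ⊕ ι_{s'}(Oᵏ⁻¹_{s'})`; since the blocks are independent, this
bounds the rank by `rk M^s_k + rk M^{s'}_k` and by `rk M^s_{k-1} + rk M^{s'}_{k-1} + 1`, which
gives `(a) ∨ (b) → Φ_k`. Conversely at `u = 0` the rows span exactly
`ι_s(Oᵏ_s) ⊕ ι_{s'}(Oᵏ⁻¹_{s'})`, so if no `rk M^i_{k-1}` drops below `k`, the bound `2k` forces
`rk M^s_k ≤ k` for each `s`.
-/

section BlockInclusion

variable {n : ℕ} (r : Fin n → ℕ)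

lemma blockIncl_apply_self (i : Fin n) (v : Fin (r i + 1) → ℂ) (j : Fin (r i + 1)) :
    blockIncl r i v ⟨i, j⟩ = v j := by
  simp [blockIncl]

lemma blockIncl_apply_of_ne {i : Fin n} (v : Fin (r i + 1) → ℂ)
    {p : Σ j : Fin n, Fin (r j + 1)} (h : p.1 ≠ i) : blockIncl r i v p = 0 := by
  simp [blockIncl, h]

noncomputable def blockInclₗ (i : Fin n) :
    (Fin (r i + 1) → ℂ) →ₗ[ℂ] ((Σ j : Fin n, Fin (r j + 1)) → ℂ) where
  toFun := blockIncl r i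
  map_add' v w := by
    funext p
    by_cases h : p.1 = i <;> simp [blockIncl, h]
  map_smul' c v := by
    funext p
    by_cases h : p.1 = i <;> simp [blockIncl, h]

@[simp]
lemma blockInclₗ_apply (i : Fin n) (v : Fin (r i + 1) → ℂ) :
    blockInclₗ r i v = blockIncl r i v := rfl

lemma blockInclₗ_injective (i : Fin n) : Function.Injective (blockInclₗ r i) := by
  intro v w h
  funext j
  simpa [blockIncl_apply_self] using congrFun h ⟨i, j⟩

lemma disjoint_map_blockInclₗ {i i' : Fin n} (h : i ≠ i')
    (A : Submodule ℂ (Fin (r i + 1) → ℂ)) (B : Submodule ℂ (Fin (r i' + 1) → ℂ)) :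
    Disjoint (A.map (blockInclₗ r i)) (B.map (blockInclₗ r i')) := by
  rw [Submodule.disjoint_def]
  rintro _ ⟨v, -, rfl⟩ ⟨w, -, hw⟩
  suffices v = 0 by rw [this, map_zero]
  funext j
  have := congrFun hw ⟨i, j⟩
  simp only [blockInclₗ_apply, blockIncl_apply_self,
    blockIncl_apply_of_ne r w (p := ⟨i, j⟩) h] at this
  simpa using this.symm

lemma finrank_map_blockInclₗ (i : Fin n) (A : Submodule ℂ (Fin (r i + 1) → ℂ)) :
    Module.finrank ℂ (A.map (blockInclₗ r i)) = Module.finrank ℂ A :=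
  (Submodule.equivMapOfInjective _ (blockInclₗ_injective r i) A).finrank_eq.symm

lemma finrank_map_blockInclₗ_sup {i i' : Fin n} (h : i ≠ i')
    (A : Submodule ℂ (Fin (r i + 1) → ℂ)) (B : Submodule ℂ (Fin (r i' + 1) → ℂ)) :
    Module.finrank ℂ (A.map (blockInclₗ r i) ⊔ B.map (blockInclₗ r i') : Submodule ℂ _) =
      Module.finrank ℂ A + Module.finrank ℂ B := by
  have := Submodule.finrank_sup_add_finrank_inf_eq (A.map (blockInclₗ r i))
    (B.map (blockInclₗ r i'))
  rwa [disjoint_iff.mp (disjoint_map_blockInclₗ r h A B), finrank_bot, add_zero,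
    finrank_map_blockInclₗ, finrank_map_blockInclₗ] at this

end BlockInclusion

section RowSpace

variable {m α : Type*} [Fintype m]

lemma row_mem_rowSpace (M : Matrix m α ℂ) (i : m) : M i ∈ rowSpace M :=
  Submodule.subset_span ⟨i, rfl⟩

lemma rowSpace_le_iff {M : Matrix m α ℂ} {Q : Submodule ℂ (α → ℂ)} :
    rowSpace M ≤ Q ↔ ∀ i, M i ∈ Q := by
  rw [rowSpace, Submodule.span_le, Set.range_subset_iff]
  rfl

variable [Fintype α]

lemma rank_eq_finrank_rowSpace (M : Matrix m α ℂ) : M.rank = Module.finrank ℂ (rowSpace M) :=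
  M.rank_eq_finrank_span_row

lemma rank_le_finrank_of_rowSpace_le {M : Matrix m α ℂ} {Q : Submodule ℂ (α → ℂ)}
    (h : rowSpace M ≤ Q) : M.rank ≤ Module.finrank ℂ Q :=
  (rank_eq_finrank_rowSpace M).trans_le (Submodule.finrank_mono h)

lemma finrank_le_rank_of_le_rowSpace {M : Matrix m α ℂ} {Q : Submodule ℂ (α → ℂ)}
    (h : Q ≤ rowSpace M) : Module.finrank ℂ Q ≤ M.rank :=
  (Submodule.finrank_mono h).trans_eq (rank_eq_finrank_rowSpace M).symm

end RowSpace

section CurveJet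

variable (r : ℕ) (a : ℂ → Fin (r + 1) → ℂ) (t : ℂ)

lemma curveJet_row_eq {k k' : ℕ} (l : Fin (k + 1)) (l' : Fin (k' + 1)) (h : (l : ℕ) = l') :
    curveJet r a k t l = curveJet r a k' t l' := by
  funext j
  simp only [curveJet, Matrix.of_apply, h]

lemma curveJet_row_mem_rowSpace {k k' : ℕ} (l : Fin (k + 1)) (h : (l : ℕ) ≤ k') :
    curveJet r a k t l ∈ rowSpace (curveJet r a k' t) := by
  rw [curveJet_row_eq r a t l (⟨l, by omega⟩ : Fin (k' + 1)) rfl]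
  exact row_mem_rowSpace (curveJet r a k' t) _

lemma rank_curveJet_le (k : ℕ) : (curveJet r a k t).rank ≤ k + 1 := by
  simpa using rank_le_card_height (curveJet r a k t)

end CurveJet

lemma Fin.ne_rev_two (s : Fin 2) : s ≠ s.rev := by
  fin_cases s <;> decide

lemma Fin.eq_rev_of_ne_two {i s : Fin 2} (h : i ≠ s) : i = s.rev := by
  fin_cases i <;> fin_cases s <;> simp_all

namespace SurfaceScroll

variable (r : Fin 2 → ℕ) (a : ∀ i : Fin 2, ℂ → Fin (r i + 1) → ℂ) (t : ℂ) (s : Fin 2)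

/-- `ι_s(Osc^p C_s) ⊕ ι_{s'}(Osc^q C_{s'})`, as linear cones, where `s'` is the other index. -/
noncomputable def oscJoin (p q : ℕ) : Submodule ℂ ((Σ j : Fin 2, Fin (r j + 1)) → ℂ) :=
  (rowSpace (curveJet (r s) (a s) p t)).map (blockInclₗ r s) ⊔
    (rowSpace (curveJet (r s.rev) (a s.rev) q t)).map (blockInclₗ r s.rev)

lemma finrank_oscJoin (p q : ℕ) :
    Module.finrank ℂ (oscJoin r a t s p q) =
      (curveJet (r s) (a s) p t).rank + (curveJet (r s.rev) (a s.rev) q t).rank := by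
  rw [oscJoin, finrank_map_blockInclₗ_sup r (Fin.ne_rev_two s), rank_eq_finrank_rowSpace,
    rank_eq_finrank_rowSpace]

lemma blockIncl_mem_oscJoin_left {p : ℕ} (q : ℕ) {v : Fin (r s + 1) → ℂ}
    (hv : v ∈ rowSpace (curveJet (r s) (a s) p t)) :
    blockIncl r s v ∈ oscJoin r a t s p q :=
  Submodule.mem_sup_left (Submodule.mem_map_of_mem hv)

lemma blockIncl_mem_oscJoin_right (p : ℕ) {q : ℕ} {v : Fin (r s.rev + 1) → ℂ}
    (hv : v ∈ rowSpace (curveJet (r s.rev) (a s.rev) q t)) :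
    blockIncl r s.rev v ∈ oscJoin r a t s p q :=
  Submodule.mem_sup_right (Submodule.mem_map_of_mem hv)

variable {k : ℕ}

lemma scrollJet_inl (u : Fin 2 → ℂ) (l : Fin (k + 1)) :
    scrollJet r a k s t u (Sum.inl l) =
      blockIncl r s (curveJet (r s) (a s) k t l) +
        u s.rev • blockIncl r s.rev (curveJet (r s.rev) (a s.rev) k t l) := by
  have : Finset.univ.filter (fun i => i ≠ s) = {s.rev} := by fin_cases s <;> decide
  simp only [scrollJet, this, Finset.sum_singleton]
  rfl

lemma scrollJet_inl_mem_oscJoin (u : Fin 2 → ℂ) (l : Fin (k + 1)) {p q : ℕ}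
    (hp : (l : ℕ) ≤ p) (hq : (l : ℕ) ≤ q) :
    scrollJet r a k s t u (Sum.inl l) ∈ oscJoin r a t s p q := by
  rw [scrollJet_inl]
  exact add_mem (blockIncl_mem_oscJoin_left r a t s q (curveJet_row_mem_rowSpace _ _ _ l hp))
    (Submodule.smul_mem _ _
      (blockIncl_mem_oscJoin_right r a t s p (curveJet_row_mem_rowSpace _ _ _ l hq)))

lemma scrollJet_inr_mem_oscJoin (u : Fin 2 → ℂ) (row : {i : Fin 2 // i ≠ s} × Fin k) (p : ℕ)
    {q : ℕ} (hq : k ≤ q + 1) :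
    scrollJet r a k s t u (Sum.inr row) ∈ oscJoin r a t s p q := by
  obtain ⟨⟨i, hi⟩, m⟩ := row
  obtain rfl := Fin.eq_rev_of_ne_two hi
  exact blockIncl_mem_oscJoin_right r a t s p
    (curveJet_row_mem_rowSpace _ _ _ m.castSucc (by simp only [Fin.val_castSucc]; omega))

lemma rowSpace_scrollJet_le_oscJoin (u : Fin 2 → ℂ) :
    rowSpace (scrollJet r a k s t u) ≤ oscJoin r a t s k k :=
  rowSpace_le_iff.mpr fun
    | .inl l => scrollJet_inl_mem_oscJoin r a t s u l l.is_le l.is_le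
    | .inr row => scrollJet_inr_mem_oscJoin r a t s u row k (by omega)

/-- Only the row `Sum.inl (Fin.last k)` involves `k`-th derivatives of both curves. -/
lemma rowSpace_scrollJet_le_oscJoin_pred_sup (hk : 1 ≤ k) (u : Fin 2 → ℂ) :
    rowSpace (scrollJet r a k s t u) ≤
      oscJoin r a t s (k - 1) (k - 1) ⊔
        Submodule.span ℂ {scrollJet r a k s t u (Sum.inl (Fin.last k))} := by
  refine rowSpace_le_iff.mpr fun
    | .inl l => ?_
    | .inr row =>
      Submodule.mem_sup_left (scrollJet_inr_mem_oscJoin r a t s u row _ (by omega))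
  rcases l.is_le.lt_or_eq with hl | hl
  · exact Submodule.mem_sup_left (scrollJet_inl_mem_oscJoin r a t s u l (by omega) (by omega))
  · obtain rfl : l = Fin.last k := Fin.ext hl
    exact Submodule.mem_sup_right (Submodule.mem_span_singleton_self _)

lemma oscJoin_le_rowSpace_scrollJet_zero (hk : 1 ≤ k) :
    oscJoin r a t s k (k - 1) ≤ rowSpace (scrollJet r a k s t 0) := by
  refine sup_le (Submodule.map_le_iff_le_comap.mpr (rowSpace_le_iff.mpr fun l => ?_))
    (Submodule.map_le_iff_le_comap.mpr (rowSpace_le_iff.mpr fun m => ?_))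
  · have : blockIncl r s (curveJet (r s) (a s) k t l) = scrollJet r a k s t 0 (Sum.inl l) := by
      simp [scrollJet_inl]
    simpa [this] using row_mem_rowSpace (scrollJet r a k s t 0) (Sum.inl l)
  · have hm : (m : ℕ) < k := by omega
    have : blockIncl r s.rev (curveJet (r s.rev) (a s.rev) (k - 1) t m) =
        scrollJet r a k s t 0 (Sum.inr ⟨⟨s.rev, (Fin.ne_rev_two s).symm⟩, ⟨m, hm⟩⟩) :=
      congrArg (blockIncl r s.rev) (curveJet_row_eq _ _ _ _ _ rfl)
    simpa [this] using row_mem_rowSpace (scrollJet r a k s t 0) _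

variable (k)

lemma rank_scrollJet_le (u : Fin 2 → ℂ) :
    (scrollJet r a k s t u).rank ≤
      (curveJet (r s) (a s) k t).rank + (curveJet (r s.rev) (a s.rev) k t).rank :=
  (rank_le_finrank_of_rowSpace_le (rowSpace_scrollJet_le_oscJoin r a t s u)).trans_eq
    (finrank_oscJoin r a t s k k)

lemma rank_scrollJet_le_pred (hk : 1 ≤ k) (u : Fin 2 → ℂ) :
    (scrollJet r a k s t u).rank ≤
      (curveJet (r s) (a s) (k - 1) t).rank + (curveJet (r s.rev) (a s.rev) (k - 1) t).rank
        + 1 := by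
  refine (rank_le_finrank_of_rowSpace_le
    (rowSpace_scrollJet_le_oscJoin_pred_sup r a t s hk u)).trans
      ((Submodule.finrank_add_le_finrank_add_finrank _ _).trans ?_)
  rw [finrank_oscJoin]
  gcongr
  simpa using finrank_span_le_card ({scrollJet r a k s t u (Sum.inl (Fin.last k))} : Set _)

lemma rank_add_rank_le_rank_scrollJet_zero (hk : 1 ≤ k) :
    (curveJet (r s) (a s) k t).rank + (curveJet (r s.rev) (a s.rev) (k - 1) t).rank ≤
      (scrollJet r a k s t 0).rank :=
  (finrank_oscJoin r a t s k (k - 1)).symm.trans_le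
    (finrank_le_rank_of_le_rowSpace (oscJoin_le_rowSpace_scrollJet_zero r a t s hk))

end SurfaceScroll

open SurfaceScroll in
theorem statement12_general (r : Fin 2 → ℕ)
    (a : ∀ i : Fin 2, ℂ → Fin (r i + 1) → ℂ)
    (t0 : ℂ) (k : ℕ) (hk : 2 ≤ k) :
    (∀ (s : Fin 2) (u : Fin 2 → ℂ), (scrollJet r a k s t0 u).rank ≤ 2 * k) ↔
      ((∃ i, (curveJet (r i) (a i) (k - 1) t0).rank ≤ k - 1) ∨
        (∀ i, (curveJet (r i) (a i) k t0).rank ≤ k)) := by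
  constructor
  · refine fun hfibre => or_iff_not_imp_left.mpr fun hnot_a i => ?_
    push Not at hnot_a
    have := (rank_add_rank_le_rank_scrollJet_zero r a t0 i k (by omega)).trans (hfibre i 0)
    have := hnot_a i.rev
    omega
  · rintro (⟨i, hi⟩ | hb) s u
    · have := rank_scrollJet_le_pred r a t0 s k (by omega) u
      have := rank_curveJet_le (r s) (a s) t0 (k - 1)
      have := rank_curveJet_le (r s.rev) (a s.rev) t0 (k - 1)
      rcases eq_or_ne i s with rfl | his
      · omega
      · obtain rfl := Fin.eq_rev_of_ne_two his
        omega
    · have := rank_scrollJet_le r a t0 s k u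
      have := hb s
      have := hb s.rev
      omega

/-- Proposition 2.6: for a decomposable surface scroll (`n = 2`),
the whole fibre over `t0` lies in `Φ_k(X)` iff either (a) `p_i ∈ Φ_{k-1}(C_i)` for
some `i`, or (b) `p_i ∈ Φ_k(C_i)` for both `i = 1, 2`. -/
theorem statement12 (r : Fin 2 → ℕ) (hr : ∀ i, 1 ≤ r i)
    (a : ∀ i : Fin 2, ℂ → Fin (r i + 1) → ℂ)
    (hent : ∀ i j, Differentiable ℂ fun t => a i t j)
    (hnd : ∀ i t, (curveJet (r i) (a i) 1 t).rank = 2)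
    (t0 : ℂ) (k : ℕ) (hk : 2 ≤ k) :
    (∀ (s : Fin 2) (u : Fin 2 → ℂ), (scrollJet r a k s t0 u).rank ≤ 2 * k) ↔
      ((∃ i, (curveJet (r i) (a i) (k - 1) t0).rank ≤ k - 1) ∨
        (∀ i, (curveJet (r i) (a i) k t0).rank ≤ k)) :=
  statement12_general r a t0 k hk
end

section
/- (Corollary 2.8.) Let n = 2 and fix an integer k ≥ 2. Then Φ_k(X) is empty if and only if Φ_k(C_1) and Φ_k(C_2) are both empty; precisely: rank M^{X,s}_k(t, u) = 2k + 1 for every t ∈ ℂ, every s ∈ {1,2} and every u ∈ ℂ, if and only if rank M^i_k(t) = k + 1 for every i ∈ {1,2} and every t ∈ ℂ. -/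
/-!
Project the jet matrix of the scroll onto the `s`-th block `ℂ^{r_s+1}` of `V`. The last
`(n-1)k` rows lie in the other blocks and are killed, while the first `k+1` rows go to the rows
of `M^s_k(t)`. Those last rows are themselves independent once every `M^i_k(t)` has full rank,
being rows of `M^i_{k-1}(t)` placed in distinct blocks; so the full rank of all `M^i_k(t)` gives
full rank of `M^{X,s}_k(t,u)`. Conversely, for `u = 0` the first `k+1` rows are exactly
`ι_s` of the rows of `M^s_k(t)`. For `n = 2` the scroll matrix has `2k+1` rows.
-/

open Matrix

theorem Matrix.rank_eq_card_iff_linearIndependent_row {m n R : Type*} [Fintype m] [Fintype n]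
    [Field R] (M : Matrix m n R) : M.rank = Fintype.card m ↔ LinearIndependent R M.row := by
  rw [M.rank_eq_finrank_span_row, linearIndependent_iff_card_eq_finrank_span, Set.finrank,
    eq_comm]

theorem LinearIndependent.sum_elim_of_map_eq_zero {ι κ R M N : Type*} [Ring R]
    [AddCommGroup M] [Module R M] [AddCommGroup N] [Module R N] {v : ι → M} {w : κ → M}
    (f : M →ₗ[R] N) (hv : LinearIndependent R (f ∘ v)) (hw : LinearIndependent R w)
    (hfw : ∀ j, f (w j) = 0) : LinearIndependent R (Sum.elim v w) :=
  (hv.of_comp f).sum_type hw <| (Submodule.range_ker_disjoint hv).mono_right <|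
    Submodule.span_le.2 <| Set.range_subset_iff.2 hfw

section Blocks

variable {n : ℕ} (r : Fin n → ℕ)

def blockEquiv :
    ((Σ j : Fin n, Fin (r j + 1)) → ℂ) ≃ₗ[ℂ] ∀ j : Fin n, Fin (r j + 1) → ℂ :=
  LinearEquiv.piCurry ℂ fun j (_ : Fin (r j + 1)) => ℂ

theorem blockEquiv_blockIncl (i : Fin n) (v : Fin (r i + 1) → ℂ) :
    blockEquiv r (blockIncl r i v) = Pi.single i v := by
  funext j x
  by_cases h : j = i
  · subst h; simp [blockEquiv, blockIncl, Sigma.curry]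
  · simp [blockEquiv, blockIncl, Sigma.curry, h]

def blockInclLinearMap (i : Fin n) :
    (Fin (r i + 1) → ℂ) →ₗ[ℂ] (Σ j : Fin n, Fin (r j + 1)) → ℂ :=
  (blockEquiv r).symm.toLinearMap ∘ₗ LinearMap.single ℂ (fun j => Fin (r j + 1) → ℂ) i

theorem blockInclLinearMap_apply (i : Fin n) (v : Fin (r i + 1) → ℂ) :
    blockInclLinearMap r i v = blockIncl r i v := by
  simp [blockInclLinearMap, LinearEquiv.symm_apply_eq, blockEquiv_blockIncl]

def blockProj (i : Fin n) : ((Σ j : Fin n, Fin (r j + 1)) → ℂ) →ₗ[ℂ] Fin (r i + 1) → ℂ :=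
  LinearMap.proj i ∘ₗ (blockEquiv r).toLinearMap

@[simp]
theorem blockProj_blockIncl_self (i : Fin n) (v : Fin (r i + 1) → ℂ) :
    blockProj r i (blockIncl r i v) = v := by
  simp [blockProj, blockEquiv_blockIncl]

@[simp]
theorem blockProj_blockIncl_of_ne {i i' : Fin n} (h : i' ≠ i) (v : Fin (r i + 1) → ℂ) :
    blockProj r i' (blockIncl r i v) = 0 := by
  simp [blockProj, blockEquiv_blockIncl, h]

theorem linearIndependent_blockIncl {κ : Type*} (v : ∀ i, κ → Fin (r i + 1) → ℂ)
    (hv : ∀ i, LinearIndependent ℂ (v i)) :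
    LinearIndependent ℂ fun q : Fin n × κ => blockIncl r q.1 (v q.1 q.2) := by
  have hfun : (fun q : Fin n × κ => blockIncl r q.1 (v q.1 q.2)) =
      (blockEquiv r).symm ∘ (fun q : Σ _ : Fin n, κ => Pi.single q.1 (v q.1 q.2)) ∘
        (Equiv.sigmaEquivProd (Fin n) κ).symm := by
    funext q
    exact (blockEquiv r).eq_symm_apply.2 (blockEquiv_blockIncl r q.1 (v q.1 q.2))
  rw [hfun]
  exact ((Pi.linearIndependent_single v hv).map' _ (blockEquiv r).symm.ker).comp _
    (Equiv.sigmaEquivProd (Fin n) κ).symm.injective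

end Blocks

section Scroll

variable {n : ℕ} (r : Fin n → ℕ) (a : ∀ i : Fin n, ℂ → Fin (r i + 1) → ℂ) (k : ℕ) (s : Fin n)
  (t : ℂ)

theorem scrollJet_inl (u : Fin n → ℂ) (l : Fin (k + 1)) :
    scrollJet r a k s t u (Sum.inl l) = blockIncl r s (curveJet (r s) (a s) k t l) +
      ∑ i ∈ Finset.univ.filter (· ≠ s), u i • blockIncl r i (curveJet (r i) (a i) k t l) :=
  rfl

theorem scrollJet_inr (u : Fin n → ℂ) (q : {i : Fin n // i ≠ s} × Fin k) :
    scrollJet r a k s t u (Sum.inr q) =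
      blockIncl r q.1 (curveJet (r q.1) (a q.1) k t q.2.castSucc) :=
  rfl

theorem blockProj_scrollJet_inl (u : Fin n → ℂ) (l : Fin (k + 1)) :
    blockProj r s (scrollJet r a k s t u (Sum.inl l)) = curveJet (r s) (a s) k t l := by
  have hvanish : ∀ i ∈ Finset.univ.filter (· ≠ s),
      blockProj r s (u i • blockIncl r i (curveJet (r i) (a i) k t l)) = 0 := fun i hi => by
    rw [map_smul, blockProj_blockIncl_of_ne r (Finset.mem_filter.1 hi).2.symm, smul_zero]
  rw [scrollJet_inl, map_add, map_sum, blockProj_blockIncl_self, Finset.sum_eq_zero hvanish,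
    add_zero]

theorem blockProj_scrollJet_inr (u : Fin n → ℂ) (q : {i : Fin n // i ≠ s} × Fin k) :
    blockProj r s (scrollJet r a k s t u (Sum.inr q)) = 0 :=
  blockProj_blockIncl_of_ne r q.1.2.symm _

theorem linearIndependent_curveJet_row_of_scrollJet_zero
    (h : LinearIndependent ℂ (scrollJet r a k s t 0).row) :
    LinearIndependent ℂ (curveJet (r s) (a s) k t).row := by
  have hinl : (scrollJet r a k s t 0).row ∘ Sum.inl =
      blockInclLinearMap r s ∘ (curveJet (r s) (a s) k t).row := by
    funext l
    simp only [Function.comp_apply, Matrix.row_apply', scrollJet_inl, Pi.zero_apply, zero_smul,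
      Finset.sum_const_zero, add_zero, blockInclLinearMap_apply]
  exact .of_comp (blockInclLinearMap r s) (hinl ▸ h.comp Sum.inl Sum.inl_injective)

theorem linearIndependent_scrollJet_row (u : Fin n → ℂ)
    (h : ∀ i, LinearIndependent ℂ (curveJet (r i) (a i) k t).row) :
    LinearIndependent ℂ (scrollJet r a k s t u).row := by
  have hinr : (scrollJet r a k s t u).row ∘ Sum.inr =
      (fun q : Fin n × Fin k => blockIncl r q.1 (curveJet (r q.1) (a q.1) k t q.2.castSucc)) ∘
        Prod.map Subtype.val id :=
    funext (scrollJet_inr r a k s t u)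
  have hinl : blockProj r s ∘ (scrollJet r a k s t u).row ∘ Sum.inl =
      (curveJet (r s) (a s) k t).row :=
    funext (blockProj_scrollJet_inl r a k s t u)
  rw [← Sum.elim_comp_inl_inr (scrollJet r a k s t u).row]
  refine .sum_elim_of_map_eq_zero (blockProj r s) (hinl ▸ h s) ?_
    (blockProj_scrollJet_inr r a k s t u)
  rw [hinr]
  exact (linearIndependent_blockIncl r _ fun i => (h i).comp _ (Fin.castSucc_injective k)).comp _
    (Subtype.val_injective.prodMap Function.injective_id)

end Scroll

theorem statement14_general (r : Fin 2 → ℕ)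
    (a : ∀ i : Fin 2, ℂ → Fin (r i + 1) → ℂ)
    (k : ℕ) :
    (∀ (t : ℂ) (s : Fin 2) (u : Fin 2 → ℂ),
        (scrollJet r a k s t u).rank = 2 * k + 1) ↔
      (∀ (i : Fin 2) (t : ℂ), (curveJet (r i) (a i) k t).rank = k + 1) := by
  have hcard (s : Fin 2) :
      Fintype.card (Fin (k + 1) ⊕ ({i : Fin 2 // i ≠ s} × Fin k)) = 2 * k + 1 := by
    rw [Fintype.card_sum, Fintype.card_prod, Fintype.card_subtype_compl,
      Fintype.card_subtype_eq, Fintype.card_fin, Fintype.card_fin, Fintype.card_fin]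
    omega
  constructor
  · intro h i t
    have hscroll := (Matrix.rank_eq_card_iff_linearIndependent_row _).1
      ((h t i 0).trans (hcard i).symm)
    exact (linearIndependent_curveJet_row_of_scrollJet_zero r a k i t hscroll).rank_matrix.trans
      (Fintype.card_fin _)
  · intro h t s u
    have hcurve i := (Matrix.rank_eq_card_iff_linearIndependent_row _).1
      ((h i t).trans (Fintype.card_fin _).symm)
    exact (linearIndependent_scrollJet_row r a k s t u hcurve).rank_matrix.trans (hcard s)

/-- Corollary 2.8: for a decomposable surface scroll (`n = 2`),
`Φ_k(X) = ∅` iff `Φ_k(C_1) = Φ_k(C_2) = ∅`. -/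
theorem statement14 (r : Fin 2 → ℕ) (hr : ∀ i, 1 ≤ r i)
    (a : ∀ i : Fin 2, ℂ → Fin (r i + 1) → ℂ)
    (hent : ∀ i j, Differentiable ℂ fun t => a i t j)
    (hnd : ∀ i t, (curveJet (r i) (a i) 1 t).rank = 2)
    (k : ℕ) (hk : 2 ≤ k) :
    (∀ (t : ℂ) (s : Fin 2) (u : Fin 2 → ℂ),
        (scrollJet r a k s t u).rank = 2 * k + 1) ↔
      (∀ (i : Fin 2) (t : ℂ), (curveJet (r i) (a i) k t).rank = k + 1) :=
  statement14_general r a k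
end
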